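/- arXiv:1402.4624 — 2 statements merged into one kernel-verified Lean document; each statement's English description precedes it below -/
import Mathlib

section
/- For every τ ∈ (0,1), κ > 0, and r ∈ ℝ, the quantile Huber penalty satisfies the sandwich inequality c_τ(r) − (κ/2)·max(τ, 1−τ)² ≤ ρ_{τ,κ}(r) ≤ c_τ(r); consequently ρ_{τ,κ} converges to c_τ uniformly on ℝ as κ → 0⁺. -/
/-- The quantile check function with quantile parameter `τ`. -/
noncomputable def qCheck (τ r : ℝ) : ℝ :=
  (-τ + if r ≥ 0 then 1 else 0) * r

/-- The quantile Huber penalty with quantile parameter `τ` and smoothing parameter `κ`. -/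
noncomputable def qHuber (τ κ x : ℝ) : ℝ :=
  if x < -(τ * κ) then τ * |x| - κ * τ ^ 2 / 2
  else if x ≤ (1 - τ) * κ then x ^ 2 / (2 * κ)
  else (1 - τ) * |x| - κ * (1 - τ) ^ 2 / 2

lemma qHuber_sandwich_aux (τ : ℝ) (hτ : τ ∈ Set.Ioo (0 : ℝ) 1) (κ : ℝ) (hκ : 0 < κ)
    (r : ℝ) :
    qCheck τ r - κ / 2 * (max τ (1 - τ)) ^ 2 ≤ qHuber τ κ r ∧
      qHuber τ κ r ≤ qCheck τ r := by
  obtain ⟨hτ0, hτ1⟩ := hτ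
  have hM1 : τ ≤ max τ (1 - τ) := le_max_left _ _
  have hM2 : 1 - τ ≤ max τ (1 - τ) := le_max_right _ _
  have hM0 : 0 < max τ (1 - τ) := lt_of_lt_of_le hτ0 hM1
  have hsq1 : τ ^ 2 ≤ (max τ (1 - τ)) ^ 2 := pow_le_pow_left₀ (le_of_lt hτ0) hM1 2
  have hsq2 : (1 - τ) ^ 2 ≤ (max τ (1 - τ)) ^ 2 := pow_le_pow_left₀ (by linarith) hM2 2
  have h2κ : (0:ℝ) < 2 * κ := by linarith
  unfold qCheck qHuber
  rcases le_or_gt 0 r with hr | hr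
  · rw [if_pos hr, abs_of_nonneg hr]
    have h1 : ¬ (r < -(τ * κ)) := by nlinarith
    rw [if_neg h1]
    rcases le_or_gt r ((1 - τ) * κ) with h2 | h2
    · rw [if_pos h2]
      constructor
      · rw [le_div_iff₀ h2κ]
        nlinarith [sq_nonneg (r - (1 - τ) * κ), mul_le_mul_of_nonneg_left hsq2 (sq_nonneg κ)]
      · rw [div_le_iff₀ h2κ]
        nlinarith
    · rw [if_neg (not_le.mpr h2)]
      constructor
      · nlinarith
      · nlinarith
  · rw [if_neg (not_le.mpr hr)]
    rcases lt_or_ge r (-(τ * κ)) with h1 | h1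
    · rw [if_pos h1, abs_of_neg hr]
      constructor
      · nlinarith
      · nlinarith
    · rw [if_neg (not_lt.mpr h1)]
      have h2 : r ≤ (1 - τ) * κ := by nlinarith
      rw [if_pos h2]
      constructor
      · rw [le_div_iff₀ h2κ]
        nlinarith [sq_nonneg (r + τ * κ), mul_le_mul_of_nonneg_left hsq1 (sq_nonneg κ)]
      · rw [div_le_iff₀ h2κ]
        nlinarith

/-- Sandwich inequality between the quantile Huber penalty and the quantile check
function, and the resulting uniform convergence of `ρ_{τ,κ}` to `c_τ` as `κ → 0⁺`. -/
theorem qHuber_sandwich_and_unif (τ : ℝ) (hτ : τ ∈ Set.Ioo (0 : ℝ) 1) :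
    (∀ κ : ℝ, 0 < κ → ∀ r : ℝ,
        qCheck τ r - κ / 2 * (max τ (1 - τ)) ^ 2 ≤ qHuber τ κ r ∧
          qHuber τ κ r ≤ qCheck τ r) ∧
      TendstoUniformly (fun κ : ℝ => qHuber τ κ) (qCheck τ) (nhdsWithin 0 (Set.Ioi 0)) := by
  refine ⟨qHuber_sandwich_aux τ hτ, ?_⟩
  have hM0 : 0 < (max τ (1 - τ)) ^ 2 := by
    have : 0 < max τ (1 - τ) := lt_of_lt_of_le hτ.1 (le_max_left _ _)
    positivity
  rw [Metric.tendstoUniformly_iff]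
  intro ε hε
  have hδ : 0 < ε / (max τ (1 - τ)) ^ 2 := by positivity
  filter_upwards [Ioo_mem_nhdsGT_of_mem (Set.mem_Ico.mpr ⟨le_rfl, hδ⟩)] with κ hκ r
  obtain ⟨hκ0, hκδ⟩ := hκ
  obtain ⟨hl, hu⟩ := qHuber_sandwich_aux τ hτ κ hκ0 r
  rw [Real.dist_eq, abs_of_nonneg (by linarith)]
  have : κ / 2 * (max τ (1 - τ)) ^ 2 < ε := by
    have := (lt_div_iff₀ hM0).mp hκδ
    nlinarith
  linarith
end

section
/- Let τ ∈ (0,1), κ > 0, A ∈ ℝ^{n×p} with rows A₁,…,Aₙ, b ∈ ℝⁿ, and let L_n(x) = (1/n)·Σ_{i=1}^{n} ρ_{τ,κ}(bᵢ − Aᵢᵀx). Let E ⊆ {1,…,n} be an index set and B ⊆ ℝᵖ a set such that for every x ∈ B and every i ∈ E, the residual bᵢ − Aᵢᵀx lies in [−κτ, (1−τ)κ]. Suppose the restricted eigenvalue property holds with constant γ > 0 on differences of vectors in B: (1/n)·‖A_E(x − x′)‖₂² ≥ γ·‖x − x′‖₂² for all x, x′ ∈ B, where A_E is the submatrix of A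 consisting of the rows in E. Then L_n is strongly convex on B with modulus γ/κ: for all x, x′ ∈ B, L_n(x′) ≥ L_n(x) + ⟨∇L_n(x), x′ − x⟩ + (γ/(2κ))·‖x′ − x‖₂². -/
/-!
The clamp `qHuberDeriv τ κ x` of `x / κ` to `[-τ, 1 - τ]` maximises the concave quadratic
`s ↦ s * x - κ * s ^ 2 / 2` over that interval, and the maximum is `qHuber τ κ x`. So `qHuber` is a
supremum of affine functions touching it along the continuous slope `qHuberDeriv`, which gives
both its derivative and its tangent-line inequality. On the inlier interval `qHuber` is the
quadratic `x ^ 2 / (2 * κ)`, whose second-order expansion is exact. Summing the tangent inequality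
over all rows and the exact expansion over the rows in `E` bounds the gap
`L_n x' - L_n x - ⟪∇L_n x, x' - x⟫` below by `‖A_E (x' - x)‖² / (2 κ n)`, and the restricted
eigenvalue condition finishes.
-/

open RealInnerProductSpace

open Asymptotics Filter

/-- Tangent inequalities at `x` and at `y` squeeze the remainder `f y - f x - g x * (y - x)`
between `0` and `(g y - g x) * (y - x)`. -/
theorem hasDerivAt_of_forall_add_mul_sub_le {f g : ℝ → ℝ} {x : ℝ}
    (hsub : ∀ y z, f y + g y * (z - y) ≤ f z) (hg : ContinuousAt g x) :
    HasDerivAt f (g x) x := by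
  rw [hasDerivAt_iff_isLittleO]
  have hgap : (fun y => (g y - g x) * (y - x)) =o[nhds x] fun y => y - x := by
    simpa using ((isLittleO_one_iff ℝ).2 (tendsto_sub_nhds_zero_iff.2 hg)).mul_isBigO
      (isBigO_refl (fun y => y - x) (nhds x))
  refine (IsBigO.of_bound' (Eventually.of_forall fun y => ?_)).trans_isLittleO hgap
  have h₁ := hsub x y
  have h₂ := hsub y x
  rw [Real.norm_eq_abs, Real.norm_eq_abs, smul_eq_mul, abs_le]
  constructor <;> nlinarith [le_abs_self ((g y - g x) * (y - x))]

section qHuber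

variable {τ κ : ℝ}

noncomputable def qHuberDeriv (τ κ x : ℝ) : ℝ :=
  max (-τ) (min (x / κ) (1 - τ))

theorem continuous_qHuberDeriv : Continuous (qHuberDeriv τ κ) := by
  unfold qHuberDeriv; fun_prop

theorem qHuber_of_mem_Icc {x : ℝ} (hx : x ∈ Set.Icc (-(κ * τ)) ((1 - τ) * κ)) :
    qHuber τ κ x = x ^ 2 / (2 * κ) := by
  rw [qHuber, if_neg (by linarith [hx.1]), if_pos hx.2]

theorem qHuberDeriv_of_mem_Icc (hκ : 0 < κ) {x : ℝ}
    (hx : x ∈ Set.Icc (-(κ * τ)) ((1 - τ) * κ)) : qHuberDeriv τ κ x = x / κ := by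
  have h₁ : -τ ≤ x / κ := by rw [le_div_iff₀ hκ]; linarith [hx.1]
  have h₂ : x / κ ≤ 1 - τ := by rw [div_le_iff₀ hκ]; linarith [hx.2]
  rw [qHuberDeriv, min_eq_left h₂, max_eq_right h₁]

theorem qHuber_eq_deriv_mul_sub (hτ : τ ∈ Set.Icc (0 : ℝ) 1) (hκ : 0 < κ) (x : ℝ) :
    qHuber τ κ x = qHuberDeriv τ κ x * x - κ * qHuberDeriv τ κ x ^ 2 / 2 := by
  obtain ⟨hτ₀, hτ₁⟩ := hτ
  unfold qHuber
  split_ifs with hl hr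
  · have : x / κ < -τ := by rw [div_lt_iff₀ hκ]; linarith
    rw [qHuberDeriv, max_eq_left (by linarith [min_le_left (x / κ) (1 - τ)]),
      abs_of_neg (by nlinarith)]
    ring
  · rw [qHuberDeriv_of_mem_Icc hκ ⟨by linarith, hr⟩]
    field_simp
    ring
  · have : 1 - τ < x / κ := by rw [lt_div_iff₀ hκ]; linarith
    rw [qHuberDeriv, min_eq_right this.le, max_eq_right (by linarith),
      abs_of_pos (by nlinarith)]

theorem mul_sub_le_qHuber (hτ : τ ∈ Set.Icc (0 : ℝ) 1) (hκ : 0 < κ) {s : ℝ}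
    (hs : s ∈ Set.Icc (-τ) (1 - τ)) (y : ℝ) : s * y - κ * s ^ 2 / 2 ≤ qHuber τ κ y := by
  obtain ⟨hτ₀, hτ₁⟩ := hτ
  obtain ⟨hs₀, hs₁⟩ := hs
  unfold qHuber
  split_ifs with hl hr
  · rw [abs_of_neg (by nlinarith)]
    nlinarith [mul_nonneg hκ.le (sq_nonneg (s + τ))]
  · rw [le_div_iff₀ (by positivity)]
    nlinarith [sq_nonneg (y - κ * s)]
  · rw [abs_of_pos (by nlinarith)]
    nlinarith [mul_nonneg hκ.le (sq_nonneg (s - (1 - τ)))]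

theorem qHuber_add_deriv_mul_le (hτ : τ ∈ Set.Icc (0 : ℝ) 1) (hκ : 0 < κ) (x y : ℝ) :
    qHuber τ κ x + qHuberDeriv τ κ x * (y - x) ≤ qHuber τ κ y := by
  have hψ : qHuberDeriv τ κ x ∈ Set.Icc (-τ) (1 - τ) :=
    ⟨le_max_left _ _, max_le (by linarith) (min_le_right _ _)⟩
  linarith [qHuber_eq_deriv_mul_sub hτ hκ x, mul_sub_le_qHuber hτ hκ hψ y]

theorem hasDerivAt_qHuber (hτ : τ ∈ Set.Icc (0 : ℝ) 1) (hκ : 0 < κ) (x : ℝ) :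
    HasDerivAt (qHuber τ κ) (qHuberDeriv τ κ x) x :=
  hasDerivAt_of_forall_add_mul_sub_le (qHuber_add_deriv_mul_le hτ hκ)
    continuous_qHuberDeriv.continuousAt

theorem qHuber_add_deriv_mul_add_sq_of_mem_Icc (hκ : 0 < κ) {x y : ℝ}
    (hx : x ∈ Set.Icc (-(κ * τ)) ((1 - τ) * κ)) (hy : y ∈ Set.Icc (-(κ * τ)) ((1 - τ) * κ)) :
    qHuber τ κ x + qHuberDeriv τ κ x * (y - x) + κ⁻¹ / 2 * (y - x) ^ 2 = qHuber τ κ y := by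
  rw [qHuber_of_mem_Icc hx, qHuber_of_mem_Icc hy, qHuberDeriv_of_mem_Icc hκ hx]
  field_simp
  ring

end qHuber

section AffineComposite

variable {ι E : Type*} [Fintype ι] [NormedAddCommGroup E] [InnerProductSpace ℝ E]
  [CompleteSpace E] {φ φ' : ℝ → ℝ} (ℓ : ι → E →L[ℝ] ℝ) (b : ι → ℝ) (c : ℝ)

theorem inner_gradient_mul_sum_comp_sub (hφ : ∀ t, HasDerivAt φ (φ' t) t) (x v : E) :
    ⟪gradient (fun y => c * ∑ i, φ (b i - ℓ i y)) x, v⟫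
      = -(c * ∑ i, φ' (b i - ℓ i x) * ℓ i v) := by
  have hderiv : HasFDerivAt (fun y => c * ∑ i, φ (b i - ℓ i y))
      (c • ∑ i, φ' (b i - ℓ i x) • -ℓ i) x := by
    refine (HasFDerivAt.fun_sum fun i _ => ?_).const_mul c
    exact (hφ _).comp_hasFDerivAt x ((ℓ i).hasFDerivAt.const_sub (b i))
  rw [gradient, hderiv.fderiv, InnerProductSpace.toDual_symm_apply]
  simp [Finset.mul_sum]

theorem mul_sum_comp_sub_add_inner_gradient_le (hc : 0 ≤ c) (hφ : ∀ t, HasDerivAt φ (φ' t) t)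
    (hsub : ∀ t s, φ t + φ' t * (s - t) ≤ φ s) (S : Finset ι) (μ : ℝ) (x x' : E)
    (hS : ∀ i ∈ S, φ (b i - ℓ i x) + φ' (b i - ℓ i x) * ((b i - ℓ i x') - (b i - ℓ i x))
      + μ / 2 * ((b i - ℓ i x') - (b i - ℓ i x)) ^ 2 ≤ φ (b i - ℓ i x')) :
    c * ∑ i, φ (b i - ℓ i x) + ⟪gradient (fun y => c * ∑ i, φ (b i - ℓ i y)) x, x' - x⟫
      + c * (μ / 2 * ∑ i ∈ S, ℓ i (x' - x) ^ 2) ≤ c * ∑ i, φ (b i - ℓ i x') := by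
  classical
  have hterm : ∀ i, φ (b i - ℓ i x) - φ' (b i - ℓ i x) * ℓ i (x' - x)
      + (if i ∈ S then μ / 2 * ℓ i (x' - x) ^ 2 else 0) ≤ φ (b i - ℓ i x') := by
    intro i
    have hdiff : (b i - ℓ i x') - (b i - ℓ i x) = -ℓ i (x' - x) := by rw [map_sub]; ring
    split_ifs with hi
    · have h := hS i hi
      rw [hdiff, neg_sq] at h
      linarith
    · have h := hsub (b i - ℓ i x) (b i - ℓ i x')
      rw [hdiff] at h
      linarith
  have hsum := Finset.sum_le_sum fun i (_ : i ∈ Finset.univ) => hterm i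
  rw [Finset.sum_add_distrib, Finset.sum_sub_distrib, Finset.sum_ite_mem, Finset.univ_inter,
    ← Finset.mul_sum] at hsum
  rw [inner_gradient_mul_sum_comp_sub ℓ b c hφ]
  linarith [mul_le_mul_of_nonneg_left hsum hc]

end AffineComposite

theorem empirical_qHuber_strongly_convex_general (n p : ℕ) (τ κ : ℝ)
    (hτ : τ ∈ Set.Ioo (0 : ℝ) 1) (hκ : 0 < κ)
    (A : Matrix (Fin n) (Fin p) ℝ) (b : Fin n → ℝ)
    (Ln : EuclideanSpace ℝ (Fin p) → ℝ)
    (hLn : ∀ x : EuclideanSpace ℝ (Fin p),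
      Ln x = (1 / (n : ℝ)) * ∑ i, qHuber τ κ (b i - ∑ j, A i j * x j))
    (E : Finset (Fin n)) (B : Set (EuclideanSpace ℝ (Fin p)))
    (hinlier : ∀ x ∈ B, ∀ i ∈ E,
      b i - ∑ j, A i j * x j ∈ Set.Icc (-(κ * τ)) ((1 - τ) * κ))
    (γ : ℝ)
    (hRE : ∀ x ∈ B, ∀ x' ∈ B,
      (1 / (n : ℝ)) * ∑ i ∈ E, (∑ j, A i j * (x j - x' j)) ^ 2 ≥ γ * ‖x - x'‖ ^ 2) :
    ∀ x ∈ B, ∀ x' ∈ B,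
      Ln x' ≥ Ln x + ⟪gradient Ln x, x' - x⟫ + (γ / (2 * κ)) * ‖x' - x‖ ^ 2 := by
  intro x hx x' hx'
  have hτ' : τ ∈ Set.Icc (0 : ℝ) 1 := Set.Ioo_subset_Icc_self hτ
  let ℓ : Fin n → EuclideanSpace ℝ (Fin p) →L[ℝ] ℝ := fun i => ∑ j, A i j • EuclideanSpace.proj j
  have hℓ : ∀ i y, ℓ i y = ∑ j, A i j * y j := by simp [ℓ]
  have hLn_eq : Ln = fun y => 1 / (n : ℝ) * ∑ i, qHuber τ κ (b i - ℓ i y) := by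
    funext y
    simp only [hLn, hℓ]
  have hinlier_ℓ : ∀ y ∈ B, ∀ i ∈ E, b i - ℓ i y ∈ Set.Icc (-(κ * τ)) ((1 - τ) * κ) := by
    simpa only [hℓ] using hinlier
  have hbound := mul_sum_comp_sub_add_inner_gradient_le ℓ b (1 / (n : ℝ)) (by positivity)
    (hasDerivAt_qHuber hτ' hκ) (qHuber_add_deriv_mul_le hτ' hκ) E κ⁻¹ x x'
    fun i hi => (qHuber_add_deriv_mul_add_sq_of_mem_Icc hκ
      (hinlier_ℓ x hx i hi) (hinlier_ℓ x' hx' i hi)).le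
  have hRE_ℓ : γ * ‖x' - x‖ ^ 2 ≤ 1 / (n : ℝ) * ∑ i ∈ E, ℓ i (x' - x) ^ 2 := by
    simpa [hℓ] using hRE x' hx' x hx
  rw [hLn_eq]
  dsimp only
  have hmodulus : γ / (2 * κ) * ‖x' - x‖ ^ 2 = κ⁻¹ / 2 * (γ * ‖x' - x‖ ^ 2) := by
    field_simp
  rw [hmodulus]
  linarith [mul_le_mul_of_nonneg_left hRE_ℓ (by positivity : (0 : ℝ) ≤ κ⁻¹ / 2)]

/-- Restricted strong convexity of the empirical quantile Huber loss: if all residuals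
over `B` on the rows in `E` are inliers and `A_E` satisfies a restricted eigenvalue
property with constant `γ` on differences of points of `B`, then `L_n` is strongly
convex on `B` with modulus `γ/κ`. -/
theorem empirical_qHuber_strongly_convex (n p : ℕ) (τ κ : ℝ)
    (hτ : τ ∈ Set.Ioo (0 : ℝ) 1) (hκ : 0 < κ)
    (A : Matrix (Fin n) (Fin p) ℝ) (b : Fin n → ℝ)
    (Ln : EuclideanSpace ℝ (Fin p) → ℝ)
    (hLn : ∀ x : EuclideanSpace ℝ (Fin p),
      Ln x = (1 / (n : ℝ)) * ∑ i, qHuber τ κ (b i - ∑ j, A i j * x j))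
    (E : Finset (Fin n)) (B : Set (EuclideanSpace ℝ (Fin p)))
    (hinlier : ∀ x ∈ B, ∀ i ∈ E,
      b i - ∑ j, A i j * x j ∈ Set.Icc (-(κ * τ)) ((1 - τ) * κ))
    (γ : ℝ) (hγ : 0 < γ)
    (hRE : ∀ x ∈ B, ∀ x' ∈ B,
      (1 / (n : ℝ)) * ∑ i ∈ E, (∑ j, A i j * (x j - x' j)) ^ 2 ≥ γ * ‖x - x'‖ ^ 2) :
    ∀ x ∈ B, ∀ x' ∈ B,
      Ln x' ≥ Ln x + ⟪gradient Ln x, x' - x⟫ + (γ / (2 * κ)) * ‖x' - x‖ ^ 2 :=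
  empirical_qHuber_strongly_convex_general n p τ κ hτ hκ A b Ln hLn E B hinlier γ hRE
end
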